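/- Let P = diag(1,1,2,2) ∈ M_4(ℂ) and let U = U₁U₂ where U₁ is block diagonal with two copies of B = (1/√2)[[1,1],[−1,1]] and U₂ is block diagonal diag(1, C, 1) with C = [[0,1],[1,0]]. Then A = PU is half-normal (P commutes with UPU*), but P does not commute with U²P(U*)², and hence A is not unitarily equivalent to a weighted permutation. -/

import Mathlib

/-!
A weighted permutation `B` has `Bᴴ * B` and `B * Bᴴ` diagonal, hence is half-normal. Weighted
permutations are closed under products and unitary conjugation is a ⋆-automorphism, so every power
of a matrix unitarily equivalent to a weighted permutation is half-normal; here `A ^ 2` is not.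
This bypasses the polar-decomposition criterion.

The factor `√2 / 2` plays no role: half-normality and commutation are invariant under nonzero
scalars, so every claim reduces to an identity between integer matrices, checked by `decide`.
-/

open Matrix

def IsWeightedPerm {n : ℕ} (A : Matrix (Fin n) (Fin n) ℂ) : Prop :=
  (∀ i j₁ j₂, A i j₁ ≠ 0 → A i j₂ ≠ 0 → j₁ = j₂) ∧
  (∀ j i₁ i₂, A i₁ j ≠ 0 → A i₂ j ≠ 0 → i₁ = i₂)

def IsHalfNormal {R : Type*} [Mul R] [Star R] (a : R) : Prop :=
  Commute (star a * a) (a * star a)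

theorem isHalfNormal_map_iff {R S F : Type*} [Mul R] [Star R] [Mul S] [Star S] [FunLike F R S]
    [MulHomClass F R S] {f : F} (hf : Function.Injective f)
    (hstar : ∀ a, f (star a) = star (f a)) {a : R} :
    IsHalfNormal (f a) ↔ IsHalfNormal a := by
  simp only [IsHalfNormal, ← hstar, ← map_mul, commute_map_iff hf]

theorem isHalfNormal_smul_iff {K R : Type*} [Field K] [StarRing K] [Monoid R] [StarMul R]
    [MulAction K R] [StarModule K R] [IsScalarTower K R R] [SMulCommClass K R R]
    {c : K} (hc : c ≠ 0) {a : R} :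
    IsHalfNormal (c • a) ↔ IsHalfNormal a := by
  have hc' : star c ≠ 0 := star_ne_zero.2 hc
  simp only [IsHalfNormal, star_smul, smul_mul_smul_comm,
    Commute.smul_left_iff₀ (mul_ne_zero hc' hc), Commute.smul_right_iff₀ (mul_ne_zero hc hc')]

theorem Matrix.IsDiag.commute {n α : Type*} [Fintype n] [DecidableEq n] [CommSemiring α]
    {A B : Matrix n n α} (hA : A.IsDiag) (hB : B.IsDiag) : Commute A B := by
  rw [← hA.diagonal_diag, ← hB.diagonal_diag, commute_iff_eq, diagonal_mul_diagonal,
    diagonal_mul_diagonal]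
  simp only [mul_comm]

theorem Matrix.exists_ne_zero_of_mul_apply_ne_zero {l m n α : Type*} [Fintype m]
    [NonUnitalNonAssocSemiring α] {B : Matrix l m α} {C : Matrix m n α} {i : l} {j : n}
    (h : (B * C) i j ≠ 0) : ∃ k, B i k ≠ 0 ∧ C k j ≠ 0 := by
  obtain ⟨k, -, hk⟩ := Finset.exists_ne_zero_of_sum_ne_zero (mul_apply (M := B) ▸ h)
  exact ⟨k, left_ne_zero_of_mul hk, right_ne_zero_of_mul hk⟩

namespace IsWeightedPerm

variable {n : ℕ} {B C : Matrix (Fin n) (Fin n) ℂ}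

theorem one : IsWeightedPerm (1 : Matrix (Fin n) (Fin n) ℂ) := by
  have hdiag : ∀ {i j : Fin n}, (1 : Matrix (Fin n) (Fin n) ℂ) i j ≠ 0 → i = j :=
    fun h => not_not.1 (h ∘ one_apply_ne)
  exact ⟨fun _ _ _ h₁ h₂ => (hdiag h₁).symm.trans (hdiag h₂),
    fun _ _ _ h₁ h₂ => (hdiag h₁).trans (hdiag h₂).symm⟩

theorem mul (hB : IsWeightedPerm B) (hC : IsWeightedPerm C) : IsWeightedPerm (B * C) := by
  refine ⟨fun i j₁ j₂ h₁ h₂ => ?_, fun j i₁ i₂ h₁ h₂ => ?_⟩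
  · obtain ⟨k₁, hBk₁, hCk₁⟩ := exists_ne_zero_of_mul_apply_ne_zero h₁
    obtain ⟨k₂, hBk₂, hCk₂⟩ := exists_ne_zero_of_mul_apply_ne_zero h₂
    obtain rfl := hB.1 i k₁ k₂ hBk₁ hBk₂
    exact hC.1 k₁ j₁ j₂ hCk₁ hCk₂
  · obtain ⟨k₁, hBk₁, hCk₁⟩ := exists_ne_zero_of_mul_apply_ne_zero h₁
    obtain ⟨k₂, hBk₂, hCk₂⟩ := exists_ne_zero_of_mul_apply_ne_zero h₂
    obtain rfl := hC.2 j k₁ k₂ hCk₁ hCk₂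
    exact hB.2 k₁ i₁ i₂ hBk₁ hBk₂

theorem pow (hB : IsWeightedPerm B) (k : ℕ) : IsWeightedPerm (B ^ k) := by
  induction k with
  | zero => exact pow_zero B ▸ one
  | succ k ih => exact pow_succ B k ▸ ih.mul hB

theorem conjTranspose (hB : IsWeightedPerm B) : IsWeightedPerm Bᴴ :=
  ⟨fun i j₁ j₂ h₁ h₂ => hB.2 i j₁ j₂ (by simpa using h₁) (by simpa using h₂),
    fun j i₁ i₂ h₁ h₂ => hB.1 j i₁ i₂ (by simpa using h₁) (by simpa using h₂)⟩

theorem isDiag_conjTranspose_mul_self (hB : IsWeightedPerm B) : (Bᴴ * B).IsDiag := by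
  intro i j hij
  by_contra h
  obtain ⟨k, hki, hkj⟩ := exists_ne_zero_of_mul_apply_ne_zero h
  exact hij (hB.1 k i j (by simpa using hki) hkj)

theorem isHalfNormal (hB : IsWeightedPerm B) : IsHalfNormal B :=
  show Commute (Bᴴ * B) (B * Bᴴ) from hB.isDiag_conjTranspose_mul_self.commute
    (by simpa using hB.conjTranspose.isDiag_conjTranspose_mul_self)

theorem isHalfNormal_pow_unitary_conj (hB : IsWeightedPerm B) {V : Matrix (Fin n) (Fin n) ℂ}
    (hV : Vᴴ * V = 1) (k : ℕ) : IsHalfNormal ((Vᴴ * B * V) ^ k) := by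
  let u : unitary (Matrix (Fin n) (Fin n) ℂ) := ⟨V, mem_unitaryGroup_iff'.2 hV⟩
  let f := Unitary.conjStarAlgAut ℂ _ (star u)
  have hf : Vᴴ * B * V = f B := (Unitary.conjStarAlgAut_star_apply u B).symm
  rw [hf, ← map_pow]
  exact (isHalfNormal_map_iff f.injective (map_star f)).2 (hB.pow k).isHalfNormal

end IsWeightedPerm

theorem Matrix.star_map_intCast {n K : Type*} [Ring K] [StarRing K] (M : Matrix n n ℤ) :
    star (M.map (Int.cast : ℤ → K)) = (star M).map Int.cast :=
  (conjTranspose_map _ fun z => by simp).symm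

namespace FourByFour

def P₀ : Matrix (Fin 4) (Fin 4) ℤ := diagonal ![1, 1, 2, 2]
def N₀ : Matrix (Fin 4) (Fin 4) ℤ := !![1, 0, 1, 0; -1, 0, 1, 0; 0, 1, 0, 1; 0, -1, 0, 1]

theorem mapMatrix_P₀ : (Int.castRingHom ℂ).mapMatrix P₀ = diagonal ![1, 1, 2, 2] := by
  ext i j; fin_cases i <;> fin_cases j <;> simp [P₀]

theorem mapMatrix_N₀ : (Int.castRingHom ℂ).mapMatrix N₀ =
    !![1, 0, 1, 0; -1, 0, 1, 0; 0, 1, 0, 1; 0, -1, 0, 1] := by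
  ext i j; fin_cases i <;> fin_cases j <;> simp [N₀]

theorem isHalfNormal_P₀_mul_N₀ : IsHalfNormal (P₀ * N₀) :=
  (commute_iff_eq _ _).2 (by decide)

theorem commute_P₀_N₀_mul_P₀_mul_star_N₀ : Commute P₀ (N₀ * P₀ * star N₀) :=
  (commute_iff_eq _ _).2 (by decide)

theorem not_commute_P₀_N₀_sq_mul_P₀_mul_star_N₀_sq :
    ¬ Commute P₀ (N₀ ^ 2 * P₀ * star N₀ ^ 2) := by
  rw [commute_iff_eq]; decide

theorem not_isHalfNormal_P₀_mul_N₀_sq : ¬ IsHalfNormal ((P₀ * N₀) ^ 2) := by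
  rw [IsHalfNormal, commute_iff_eq]; decide

end FourByFour

theorem four_by_four_example
    (P U A : Matrix (Fin 4) (Fin 4) ℂ)
    (hP : P = Matrix.diagonal ![1, 1, 2, 2])
    (hU : U = ((Real.sqrt 2 / 2 : ℝ) : ℂ) •
      !![1, 0, 1, 0; -1, 0, 1, 0; 0, 1, 0, 1; 0, -1, 0, 1])
    (hA : A = P * U) :
    Commute (Aᴴ * A) (A * Aᴴ) ∧
    Commute P (U * P * Uᴴ) ∧
    ¬ Commute P (U ^ 2 * P * (Uᴴ) ^ 2) ∧
    ¬ ∃ (V B : Matrix (Fin 4) (Fin 4) ℂ), Vᴴ * V = 1 ∧ IsWeightedPerm B ∧ A = Vᴴ * B * V := by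
  set c : ℂ := ((Real.sqrt 2 / 2 : ℝ) : ℂ)
  have hc : c ≠ 0 := by simp [c]
  rw [← FourByFour.mapMatrix_P₀] at hP
  rw [← FourByFour.mapMatrix_N₀] at hU
  set ι := (Int.castRingHom ℂ).mapMatrix (m := Fin 4)
  have hι : Function.Injective ι := map_injective Int.cast_injective
  have hιstar : ∀ M, ι (star M) = star (ι M) := fun M => (star_map_intCast M).symm
  have hA' : A = c • ι (FourByFour.P₀ * FourByFour.N₀) := by
    rw [hA, hP, hU, map_mul, mul_smul_comm]
  refine ⟨?_, ?_, ?_, ?_⟩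
  · change IsHalfNormal A
    rw [hA', isHalfNormal_smul_iff hc, isHalfNormal_map_iff hι hιstar]
    exact FourByFour.isHalfNormal_P₀_mul_N₀
  · rw [hU, hP]
    simp only [← star_eq_conjTranspose, star_smul, smul_mul_assoc, mul_smul_comm,
      Commute.smul_right_iff₀ hc, Commute.smul_right_iff₀ (star_ne_zero.2 hc), ← hιstar,
      ← map_mul, commute_map_iff hι]
    exact FourByFour.commute_P₀_N₀_mul_P₀_mul_star_N₀
  · rw [hU, hP]
    simp only [← star_eq_conjTranspose, star_smul, smul_pow, smul_mul_assoc, mul_smul_comm,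
      Commute.smul_right_iff₀ (pow_ne_zero 2 hc),
      Commute.smul_right_iff₀ (pow_ne_zero 2 (star_ne_zero.2 hc)), ← hιstar, ← map_pow, ← map_mul,
      commute_map_iff hι]
    exact FourByFour.not_commute_P₀_N₀_sq_mul_P₀_mul_star_N₀_sq
  · rintro ⟨V, B, hV, hB, rfl⟩
    have hsq := hB.isHalfNormal_pow_unitary_conj hV 2
    rw [hA', smul_pow, isHalfNormal_smul_iff (pow_ne_zero 2 hc), ← map_pow,
      isHalfNormal_map_iff hι hιstar] at hsq
    exact FourByFour.not_isHalfNormal_P₀_mul_N₀_sq hsq
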